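/- Let n ≥ 2 be an integer. Then, as the real parameter L → ∞, (2L)^{n+1/2} · ∑_{k=1}^∞ Γ(2Lk − n + 1)/Γ(2Lk + 3/2) converges to ζ(n + 1/2), where ζ is the Riemann zeta function. -/

import Mathlib

/-- The Riemann zeta function at a real argument, `ζ(x) = ∑_{k≥1} k^{-x}`. -/
noncomputable def zetaReal (x : ℝ) : ℝ := ∑' k : ℕ+, (1 : ℝ) / (k : ℝ) ^ x

/-!
Log-convexity of `Γ` squeezes `Γ(y + a) / (Γ(y) y^a)` between `((y + a) / y)^(a - 1)` and `1` when
`0 ≤ a ≤ 1`, so it tends to `1`; the functional equation `Γ(y + 1) = y Γ(y)` carries this over to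
every `a ≥ 0`. With `x = t k + c`, the term `t^a Γ(x) / Γ(x + a)` therefore tends to `k^(-a)`, and
since `Γ(x + a) / (Γ(x) x^a)` eventually exceeds `1/2`, the term is at most `2^(a+1) k^(-a)` for
all `k ≥ 1` once `t` is large. Dominated convergence for series then gives the limit of the sum; the theorem is the
case `t = 2L`, `c = 1 - n`, `a = n + 1/2`.
-/

open Real Filter Set Topology

theorem tendsto_add_const_div_self_atTop (c : ℝ) :
    Tendsto (fun y : ℝ => (y + c) / y) atTop (𝓝 1) := by
  have h : Tendsto (fun y : ℝ => 1 + c / y) atTop (𝓝 (1 + 0)) :=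
    tendsto_const_nhds.add (tendsto_const_nhds.div_atTop tendsto_id)
  rw [add_zero] at h
  refine h.congr' ?_
  filter_upwards [eventually_gt_atTop 0] with y hy
  rw [add_div, div_self hy.ne']

namespace Real

theorem Gamma_add_le_Gamma_mul_rpow {y a : ℝ} (hy : 0 < y) (ha₀ : 0 ≤ a) (ha₁ : a ≤ 1) :
    Gamma (y + a) ≤ Gamma y * y ^ a := by
  have hΓ := Gamma_pos_of_pos hy
  have hconv := convexOn_log_Gamma.2 (mem_Ioi.2 hy) (mem_Ioi.2 (by linarith : 0 < y + 1))
    (sub_nonneg.2 ha₁) ha₀ (by ring)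
  have hmid : (1 - a) * y + a * (y + 1) = y + a := by ring
  simp only [Function.comp_apply, smul_eq_mul, hmid, Gamma_add_one hy.ne',
    log_mul hy.ne' hΓ.ne'] at hconv
  rw [← log_le_log_iff (Gamma_pos_of_pos (by linarith)) (by positivity),
    log_mul hΓ.ne' (by positivity), log_rpow hy]
  linarith

theorem mul_Gamma_mul_rpow_le_Gamma_add {y a : ℝ} (hy : 0 < y) (ha₀ : 0 ≤ a) (ha₁ : a ≤ 1) :
    y * Gamma y * (y + a) ^ (a - 1) ≤ Gamma (y + a) := by
  have hya : 0 < y + a := by linarith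
  have h := Gamma_add_le_Gamma_mul_rpow hya (sub_nonneg.2 ha₁) (by linarith)
  rw [add_add_sub_cancel, Gamma_add_one hy.ne'] at h
  calc y * Gamma y * (y + a) ^ (a - 1)
      ≤ Gamma (y + a) * (y + a) ^ (1 - a) * (y + a) ^ (a - 1) := by gcongr
    _ = Gamma (y + a) := by rw [mul_assoc, ← rpow_add hya]; simp

theorem tendsto_Gamma_add_div_Gamma_mul_rpow_of_le_one {a : ℝ} (ha₀ : 0 ≤ a) (ha₁ : a ≤ 1) :
    Tendsto (fun y => Gamma (y + a) / (Gamma y * y ^ a)) atTop (𝓝 1) := by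
  have hlow : Tendsto (fun y : ℝ => ((y + a) / y) ^ (a - 1)) atTop (𝓝 1) := by
    simpa using (tendsto_add_const_div_self_atTop a).rpow_const (Or.inl one_ne_zero)
  refine tendsto_of_tendsto_of_tendsto_of_le_of_le' hlow tendsto_const_nhds ?_ ?_
  all_goals filter_upwards [eventually_gt_atTop 0] with y hy
  · have hΓ := Gamma_pos_of_pos hy
    rw [div_rpow (by linarith) hy.le, rpow_sub_one hy.ne', le_div_iff₀ (by positivity)]
    calc (y + a) ^ (a - 1) / (y ^ a / y) * (Gamma y * y ^ a)
        = y * Gamma y * (y + a) ^ (a - 1) := by field_simp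
      _ ≤ Gamma (y + a) := mul_Gamma_mul_rpow_le_Gamma_add hy ha₀ ha₁
  · exact div_le_one_of_le₀ (Gamma_add_le_Gamma_mul_rpow hy ha₀ ha₁)
      (by have := Gamma_pos_of_pos hy; positivity)

theorem tendsto_Gamma_add_one_div_Gamma_mul_rpow {a : ℝ}
    (h : Tendsto (fun y => Gamma (y + a) / (Gamma y * y ^ a)) atTop (𝓝 1)) :
    Tendsto (fun y => Gamma (y + (a + 1)) / (Gamma y * y ^ (a + 1))) atTop (𝓝 1) := by
  have h' := h.mul (tendsto_add_const_div_self_atTop a)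
  rw [mul_one] at h'
  refine h'.congr' ?_
  filter_upwards [eventually_gt_atTop 0, eventually_ne_atTop (-a)] with y hy hya
  rw [← add_assoc, Gamma_add_one (by contrapose! hya; linarith), rpow_add_one hy.ne']
  field_simp

theorem tendsto_Gamma_add_div_Gamma_mul_rpow {a : ℝ} (ha : 0 ≤ a) :
    Tendsto (fun y => Gamma (y + a) / (Gamma y * y ^ a)) atTop (𝓝 1) := by
  suffices ∀ m : ℕ, ∀ b, 0 ≤ b → b ≤ 1 →
      Tendsto (fun y => Gamma (y + (b + m)) / (Gamma y * y ^ (b + m))) atTop (𝓝 1) by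
    simpa using this ⌊a⌋₊ (a - ⌊a⌋₊) (sub_nonneg.2 (Nat.floor_le ha))
      (by linarith [Nat.lt_floor_add_one a])
  intro m b hb₀ hb₁
  induction m with
  | zero => simpa using tendsto_Gamma_add_div_Gamma_mul_rpow_of_le_one hb₀ hb₁
  | succ m ih => simpa [← add_assoc] using tendsto_Gamma_add_one_div_Gamma_mul_rpow ih

theorem rpow_mul_Gamma_div_Gamma_add_eq {a t x : ℝ} (ht : 0 < t) (hx : 0 < x) :
    t ^ a * (Gamma x / Gamma (x + a)) =
      ((x / t) ^ a * (Gamma (x + a) / (Gamma x * x ^ a)))⁻¹ := by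
  have := Gamma_pos_of_pos hx
  rw [div_rpow hx.le ht.le]
  field_simp

theorem tendsto_rpow_mul_Gamma_div_Gamma_add {a k : ℝ} (ha : 0 ≤ a) (hk : 0 < k) (c : ℝ) :
    Tendsto (fun t => t ^ a * (Gamma (t * k + c) / Gamma (t * k + c + a))) atTop
      (𝓝 (1 / k ^ a)) := by
  have hx : Tendsto (fun t => t * k + c) atTop atTop :=
    tendsto_atTop_add_const_right _ c (tendsto_id.atTop_mul_const hk)
  have hslope : Tendsto (fun t : ℝ => k + c / t) atTop (𝓝 k) := by
    simpa using (tendsto_const_nhds (x := k)).add (tendsto_const_nhds.div_atTop tendsto_id)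
  have h := ((hslope.rpow_const (p := a) (Or.inl hk.ne')).mul
    ((tendsto_Gamma_add_div_Gamma_mul_rpow ha).comp hx)).inv₀ (by positivity)
  rw [mul_one, inv_eq_one_div] at h
  refine h.congr' ?_
  filter_upwards [eventually_gt_atTop 0, hx.eventually_gt_atTop 0] with t ht hxt
  rw [rpow_mul_Gamma_div_Gamma_add_eq ht hxt, add_div, mul_div_cancel_left₀ k ht.ne']
  rfl

theorem eventually_abs_rpow_mul_Gamma_div_Gamma_add_le {a : ℝ} (ha : 0 ≤ a) (c : ℝ) :
    ∀ᶠ t in atTop, ∀ k : ℝ, 1 ≤ k →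
      |t ^ a * (Gamma (t * k + c) / Gamma (t * k + c + a))| ≤ 2 ^ (a + 1) / k ^ a := by
  obtain ⟨Y, hY⟩ := eventually_atTop.1 <|
    (tendsto_order.1 (tendsto_Gamma_add_div_Gamma_mul_rpow ha)).1 (1 / 2) (by norm_num)
  filter_upwards [eventually_ge_atTop (2 * Y), eventually_ge_atTop (2 * |c|),
    eventually_gt_atTop 0] with t htY htc ht k hk
  have hc : -(t * k / 2) ≤ c := by nlinarith [neg_abs_le c]
  have hxt : k / 2 ≤ (t * k + c) / t := by rw [le_div_iff₀ ht]; linarith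
  have hx : 0 < t * k + c := by nlinarith
  have hR := hY (t * k + c) (by nlinarith)
  rw [rpow_mul_Gamma_div_Gamma_add_eq ht hx, abs_of_pos (by positivity)]
  calc (((t * k + c) / t) ^ a * (Gamma (t * k + c + a) / (Gamma (t * k + c) * (t * k + c) ^ a)))⁻¹
      ≤ ((k / 2) ^ a * (1 / 2))⁻¹ := by gcongr
    _ = 2 ^ (a + 1) / k ^ a := by
      rw [div_rpow (by linarith) zero_le_two, rpow_add_one two_ne_zero]
      field_simp

theorem tendsto_rpow_mul_tsum_Gamma_div_Gamma_add {a : ℝ} (ha : 1 < a) (c : ℝ) :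
    Tendsto (fun t => t ^ a * ∑' k : ℕ+, Gamma (t * k + c) / Gamma (t * k + c + a)) atTop
      (𝓝 (∑' k : ℕ+, 1 / (k : ℝ) ^ a)) := by
  have ha₀ : 0 ≤ a := by linarith
  have hsum : Summable fun k : ℕ+ => 2 ^ (a + 1) / (k : ℝ) ^ a := by
    simpa [div_eq_mul_one_div (2 ^ (a + 1) : ℝ)] using
      ((summable_one_div_nat_rpow.2 ha).comp_injective PNat.coe_injective).mul_left (2 ^ (a + 1))
  simp_rw [← tsum_mul_left]
  refine tendsto_tsum_of_dominated_convergence hsum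
    (fun k => tendsto_rpow_mul_Gamma_div_Gamma_add ha₀ (by positivity) c) ?_
  filter_upwards [eventually_abs_rpow_mul_Gamma_div_Gamma_add_le ha₀ c] with t ht k
  exact ht k (Nat.one_le_cast.2 k.pos)

end Real

/-- The series asymptotic used in the proof of Theorem 2: as `L → ∞`,
`(2L)^{n+1/2} ∑_{k≥1} Γ(2Lk-n+1)/Γ(2Lk+3/2) → ζ(n+1/2)`. -/
theorem gamma_ratio_series_asymptotics
    (n : ℕ) (hn : 2 ≤ n) :
    Filter.Tendsto
      (fun L : ℝ => (2 * L) ^ ((n : ℝ) + 1 / 2) *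
        ∑' k : ℕ+, Real.Gamma (2 * L * k - n + 1) / Real.Gamma (2 * L * k + 3 / 2))
      Filter.atTop (nhds (zetaReal ((n : ℝ) + 1 / 2))) := by
  have ha : (1 : ℝ) < n + 1 / 2 := by
    have : (2 : ℝ) ≤ n := by exact_mod_cast hn
    linarith
  have h := (tendsto_rpow_mul_tsum_Gamma_div_Gamma_add ha (1 - n)).comp
    (tendsto_id.const_mul_atTop two_pos)
  refine h.congr fun L => ?_
  simp only [Function.comp_apply, id]
  congr 1
  refine tsum_congr fun k => ?_
  congr 2 <;> ring
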